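/- Let β > 0; set λ = 1/3 and E^F(n, l) = 2n + |l| + F + (1/3)(l + F) for n ∈ ℕ, l ∈ ℤ, F ∈ {0,1,2}. Then the family over (n, l) ∈ ℕ × ℤ of e^{−β·E⁰(n,l)} − 2·e^{−β·E¹(n,l)} + e^{−β·E²(n,l)} is summable, with sum 1 + e^{−2β/3}. -/

import Mathlib

/-- The spectrum `E^F_{nl} = 2n + |l| + F + (1/3)(l + F)` of the Hamiltonian
`H_{1/3}` of the complex weak supersymmetric model at `λ = 1/3`. -/
noncomputable def Elevel (F : ℕ) (n : ℕ) (l : ℤ) : ℝ :=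
  2 * n + |(l : ℝ)| + F + (1 / 3) * ((l : ℝ) + F)

/-- **Equation (4.14) of the paper:** for `λ = 1/3` (the `n = 3` Wess–Zumino case)
the Witten (Römelsberger) index equals `I(3) = 1 + e^{−2β/3}`. -/
theorem romelsberger_index_n3 (β : ℝ) (hβ : 0 < β) :
    HasSum
      (fun p : ℕ × ℤ =>
        Real.exp (-β * Elevel 0 p.1 p.2)
          - 2 * Real.exp (-β * Elevel 1 p.1 p.2)
          + Real.exp (-β * Elevel 2 p.1 p.2))
      (1 + Real.exp (-2 * β / 3)) := by
  set x : ℝ := Real.exp (-2 * β / 3) with hxdef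
  have hx0 : 0 < x := Real.exp_pos _
  have hx1 : x < 1 := by
    rw [hxdef, Real.exp_lt_one_iff]; nlinarith
  have hx2 : x ^ 2 < 1 := pow_lt_one₀ hx0.le hx1 two_ne_zero
  have hx3 : x ^ 3 < 1 := pow_lt_one₀ hx0.le hx1 three_ne_zero
  have e1 : (1:ℝ) - x ≠ 0 := sub_ne_zero.mpr (ne_of_lt hx1).symm
  have e2 : (1:ℝ) - x ^ 2 ≠ 0 := sub_ne_zero.mpr (ne_of_lt hx2).symm
  have e3 : (1:ℝ) - x ^ 3 ≠ 0 := sub_ne_zero.mpr (ne_of_lt hx3).symm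
  set f : ℤ → ℝ := fun l => Real.exp (-β * (|(l : ℝ)| + (1/3) * l)) with hfdef
  have h1 : HasSum (fun n : ℕ => (x^2) ^ n) (1 - x^2)⁻¹ :=
    hasSum_geometric_of_lt_one (by positivity) hx2
  have h2 : HasSum (fun n : ℕ => x * x ^ n) (x * (1 - x)⁻¹) :=
    (hasSum_geometric_of_lt_one hx0.le hx1).mul_left x
  have hfeq : f = fun l : ℤ => Int.rec (fun n : ℕ => (x^2)^n) (fun n : ℕ => x * x ^ n) l := by
    funext l
    cases l with
    | ofNat n =>
      show f (n : ℤ) = (x^2)^n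
      rw [hfdef]
      simp only
      rw [hxdef, ← Real.exp_nat_mul, ← Real.exp_nat_mul]
      congr 1
      push_cast
      rw [abs_of_nonneg (Nat.cast_nonneg n)]
      ring
    | negSucc n =>
      show f (Int.negSucc n) = x * x ^ n
      rw [hfdef]
      simp only
      rw [hxdef, ← Real.exp_nat_mul, ← Real.exp_add]
      congr 1
      have hc : ((Int.negSucc n : ℤ) : ℝ) = -((n : ℝ) + 1) := by push_cast; ring
      rw [hc, abs_neg, abs_of_nonneg (by positivity)]
      ring
  have hZ : HasSum f ((1 - x^2)⁻¹ + x * (1 - x)⁻¹) := by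
    rw [hfeq]; exact h1.int_rec h2
  have hN : HasSum (fun n : ℕ => Real.exp (-(2*β) * n)) (1 - x^3)⁻¹ := by
    have h : (fun n : ℕ => Real.exp (-(2*β) * n)) = fun n : ℕ => (x^3) ^ n := by
      funext n
      rw [hxdef, ← Real.exp_nat_mul, ← Real.exp_nat_mul]
      ring_nf
    rw [h]
    exact hasSum_geometric_of_lt_one (by positivity) hx3
  have hsum : Summable (fun p : ℕ × ℤ => Real.exp (-(2*β) * p.1) * f p.2) := by
    apply hN.summable.mul_of_nonneg hZ.summable
    · intro n; positivity
    · intro l; rw [hfdef]; positivity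
  have hprod : HasSum (fun p : ℕ × ℤ => Real.exp (-(2*β) * p.1) * f p.2)
      ((1 - x^3)⁻¹ * ((1 - x^2)⁻¹ + x * (1 - x)⁻¹)) := hN.mul hZ hsum
  have hfinal := hprod.mul_left ((1 - x^2)^2)
  have hpt : (fun p : ℕ × ℤ =>
        Real.exp (-β * Elevel 0 p.1 p.2)
          - 2 * Real.exp (-β * Elevel 1 p.1 p.2)
          + Real.exp (-β * Elevel 2 p.1 p.2))
      = fun p : ℕ × ℤ => (1 - x^2)^2 * (Real.exp (-(2*β) * p.1) * f p.2) := by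
    funext p
    obtain ⟨n, l⟩ := p
    have key : ∀ F : ℕ, Real.exp (-β * Elevel F n l)
        = Real.exp (-(2*β) * n) * f l * x ^ (2 * F) := by
      intro F
      rw [hfdef, hxdef]
      simp only [Elevel]
      rw [← Real.exp_nat_mul, ← Real.exp_add, ← Real.exp_add]
      congr 1
      push_cast
      ring
    simp only [key 0, key 1, key 2]
    ring
  rw [hpt]
  convert hfinal using 1
  rotate_left
  field_simp
  ring
  all_goals rfl
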